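/- Let $p$ be an odd prime, $r \in \mathbb{N}$, $\sigma_j = ((j{-}1)p{+}1\ \ldots\ jp)(\overline{(j{-}1)p{+}1}\ \ldots\ \overline{jp})$ for $1\le j\le r$, and $R_r = \langle \sigma_1\sigma_2\cdots\sigma_r\rangle \le C_2\wr S_{rp}$. Then the centraliser $C_{C_2\wr S_{rp}}(R_r)$ is isomorphic as an abstract group to $C_{2p} \wr S_r$. -/

import Mathlib

/-
For odd `p` the Chinese remainder theorem identifies a block `Fin p × Bool` (a `p`-cycle and its
barred copy) with `ZMod (2 * p) ≅ ZMod 2 × ZMod p`, turning the bar involution and the rotation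
into translations by two generators. So the centraliser is that of all translations of
`Fin r × ZMod (2 * p)` inside the blocks, and a permutation commuting with these permutes the
blocks and maps each block onto its image by a translation: it is an element of
`ZMod (2 * p) ≀ S_r`.
-/

/-- The bar involution. -/
def barPerm (α : Type*) : Equiv.Perm (α × Bool) :=
  Function.Involutive.toPerm (fun x => (x.1, !x.2)) (by intro x; simp)

/-- The permutation `σ₁σ₂⋯σ_r` rotating each of the `r` blocks of size `p`. -/
def rotBlocks (r p : ℕ) : Equiv.Perm ((Fin r × Fin p) × Bool) :=
  Equiv.prodCongr (Equiv.prodCongr (Equiv.refl (Fin r)) (finRotate p)) (Equiv.refl Bool)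

/-- The coordinate-permuting action of `Perm (Fin r)` on `Fin r → G`. -/
def permAut (G : Type*) [Group G] (r : ℕ) : Equiv.Perm (Fin r) →* MulAut (Fin r → G) where
  toFun σ :=
    { toFun := fun f => f ∘ σ.symm
      invFun := fun f => f ∘ σ
      left_inv := fun f => by funext x; simp
      right_inv := fun f => by funext x; simp
      map_mul' := fun f g => rfl }
  map_one' := by ext f x; rfl
  map_mul' := fun σ τ => by ext f x; rfl

/-- The abstract wreath product `G ≀ S_r`. -/
abbrev Wreath (G : Type*) [Group G] (r : ℕ) :=
  SemidirectProduct (Fin r → G) (Equiv.Perm (Fin r)) (permAut G r)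

open Equiv

@[simp] lemma barPerm_apply {α : Type*} (x : α × Bool) : barPerm α x = (x.1, !x.2) :=
  rfl

@[simp] lemma rotBlocks_apply {r p : ℕ} (x : (Fin r × Fin p) × Bool) :
    rotBlocks r p x = ((x.1.1, finRotate p x.1.2), x.2) :=
  rfl

lemma Subgroup.map_equiv_centralizer {G H : Type*} [Group G] [Group H] (φ : G ≃* H) (S : Set G) :
    (Subgroup.centralizer S).map (φ : G →* H) = Subgroup.centralizer (φ '' S) := by
  refine le_antisymm (Subgroup.map_centralizer_le_centralizer_image S _) fun h hh => ?_
  refine ⟨φ.symm h, ?_, by simp⟩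
  simpa [Set.image_image] using
    Subgroup.map_centralizer_le_centralizer_image _ (φ.symm : H →* G) ⟨h, hh, rfl⟩

noncomputable def MulEquiv.centralizerMap {G H : Type*} [Group G] [Group H] (φ : G ≃* H)
    (S : Set G) : Subgroup.centralizer S ≃* Subgroup.centralizer (φ '' S) :=
  (φ.subgroupMap _).trans (MulEquiv.subgroupCongr (Subgroup.map_equiv_centralizer φ S))

section Translation

variable {A : Type*} [AddCommGroup A] {r : ℕ}

def translation (r : ℕ) (a : A) : Perm (Fin r × A) :=
  (Equiv.refl _).prodCongr (Equiv.addRight a)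

@[simp] lemma translation_apply (a : A) (x : Fin r × A) : translation r a x = (x.1, x.2 + a) :=
  rfl

lemma translation_zero : translation r (0 : A) = 1 := by
  ext x <;> simp

lemma translation_add (a b : A) : translation r (a + b) = translation r a * translation r b := by
  ext x <;> simp [add_right_comm, add_assoc]

lemma translation_neg (a : A) : translation r (-a) = (translation r a)⁻¹ := by
  rw [eq_inv_iff_mul_eq_one, ← translation_add, neg_add_cancel, translation_zero]

lemma commute_translation_of_mem_closure {S : Set A} {g : Perm (Fin r × A)}
    (hS : ∀ a ∈ S, Commute g (translation r a)) {a : A} (ha : a ∈ AddSubgroup.closure S) :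
    Commute g (translation r a) := by
  induction ha using AddSubgroup.closure_induction with
  | mem a ha => exact hS a ha
  | zero => simpa only [translation_zero] using Commute.one_right g
  | add a b _ _ ha hb => simpa only [translation_add] using ha.mul_right hb
  | neg a _ ha => simpa only [translation_neg] using ha.inv_right

lemma apply_eq_of_commute_translation {g : Perm (Fin r × A)}
    (hg : ∀ a, Commute g (translation r a)) (j : Fin r) (x : A) :
    g (j, x) = ((g (j, 0)).1, (g (j, 0)).2 + x) := by
  simpa using congr($((hg x).eq) (j, 0))

variable (A r) in
/-- The wreath product acts on `r` copies of `A`: `(f, σ)` moves block `j` to block `σ j`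
and then translates it by `f (σ j)`. -/
def wreathHom : Wreath (Multiplicative A) r →* Perm (Fin r × A) where
  toFun w :=
    { toFun := fun x => (w.right x.1, x.2 + (w.left (w.right x.1)).toAdd)
      invFun := fun x => (w.right⁻¹ x.1, x.2 - (w.left x.1).toAdd)
      left_inv := fun x => by simp
      right_inv := fun x => by simp }
  map_one' := by ext x <;> simp
  map_mul' v w := by
    ext x
    · rfl
    · simp only [permAut, SemidirectProduct.mul_right, SemidirectProduct.mul_left, Perm.coe_mul,
        Function.comp_apply, MonoidHom.coe_mk, OneHom.coe_mk, MulEquiv.coe_mk, coe_fn_mk,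
        Pi.mul_apply, symm_apply_apply, toAdd_mul]
      abel

@[simp] lemma wreathHom_apply (w : Wreath (Multiplicative A) r) (x : Fin r × A) :
    wreathHom A r w x = (w.right x.1, x.2 + (w.left (w.right x.1)).toAdd) :=
  rfl

lemma wreathHom_injective : Function.Injective (wreathHom A r) := by
  intro v w hvw
  have hvw' (x : Fin r × A) := congr($hvw x)
  simp only [wreathHom_apply, Prod.ext_iff] at hvw'
  have hright : v.right = w.right := Equiv.ext fun j => (hvw' (j, 0)).1
  refine SemidirectProduct.ext (funext fun j => ?_) hright
  simpa [hright] using (hvw' (w.right⁻¹ j, 0)).2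

lemma mem_range_wreathHom_iff {g : Perm (Fin r × A)} :
    g ∈ (wreathHom A r).range ↔ ∀ a, Commute g (translation r a) := by
  refine ⟨?_, fun hg => ?_⟩
  · rintro ⟨w, rfl⟩ a
    ext x <;> simp [add_right_comm]
  set σ : Fin r → Fin r := fun j => (g (j, 0)).1
  have hσ : σ.Surjective := fun k => by
    refine ⟨(g⁻¹ (k, 0)).1, ?_⟩
    have := apply_eq_of_commute_translation hg (g⁻¹ (k, 0)).1 (g⁻¹ (k, 0)).2
    simpa using congr($this.1).symm
  let τ := Equiv.ofBijective σ (Finite.surjective_iff_bijective.mp hσ)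
  refine ⟨⟨fun k => .ofAdd (g (τ.symm k, 0)).2, τ⟩, Equiv.ext fun x => ?_⟩
  rw [apply_eq_of_commute_translation hg x.1 x.2]
  simp [τ, σ, add_comm]

lemma range_wreathHom {S : Set A} (hS : AddSubgroup.closure S = ⊤) :
    (wreathHom A r).range = Subgroup.centralizer (translation r '' S) := by
  ext g
  rw [mem_range_wreathHom_iff, Subgroup.mem_centralizer_iff, Set.forall_mem_image]
  refine ⟨fun hg a _ => (hg a).symm.eq, fun hg a => ?_⟩
  exact commute_translation_of_mem_closure (fun a ha => (hg ha).symm) (hS ▸ trivial)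

noncomputable def centralizerTranslationEquivWreath {S : Set A}
    (hS : AddSubgroup.closure S = ⊤) :
    Subgroup.centralizer (translation r '' S) ≃* Wreath (Multiplicative A) r :=
  ((MonoidHom.ofInjective wreathHom_injective).trans
    (MulEquiv.subgroupCongr (range_wreathHom hS))).symm

end Translation

lemma ZMod.closure_chineseRemainder_symm_eq_top {m n : ℕ} (h : m.Coprime n) :
    AddSubgroup.closure
      {(ZMod.chineseRemainder h).symm (1, 0), (ZMod.chineseRemainder h).symm (0, 1)} = ⊤ := by
  set S : Set (ZMod (m * n)) :=
    {(ZMod.chineseRemainder h).symm (1, 0), (ZMod.chineseRemainder h).symm (0, 1)}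
  have hone : (1 : ZMod (m * n)) ∈ AddSubgroup.closure S := by
    rw [← map_one (ZMod.chineseRemainder h).symm, ← Prod.mk_one_one,
      show ((1 : ZMod m), (1 : ZMod n)) = (1, 0) + (0, 1) by simp, map_add]
    exact add_mem (AddSubgroup.subset_closure (by simp [S]))
      (AddSubgroup.subset_closure (by simp [S]))
  refine eq_top_iff.mpr fun x _ => ?_
  simpa [ZMod.intCast_zmod_cast] using AddSubgroup.zsmul_mem _ hone (x.cast : ℤ)

section Block

variable {p : ℕ} [NeZero p] (hp : Nat.Coprime 2 p)

def blockEquivZMod : Fin p × Bool ≃ ZMod (2 * p) :=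
  (Equiv.prodComm _ _).trans <|
    ((finTwoEquiv.symm.trans (ZMod.finEquiv 2).toEquiv).prodCongr (ZMod.finEquiv p).toEquiv).trans
      (ZMod.chineseRemainder hp).symm.toEquiv

lemma blockEquivZMod_apply (i : Fin p) (ε : Bool) :
    blockEquivZMod hp (i, ε) =
      (ZMod.chineseRemainder hp).symm (ZMod.finEquiv 2 (finTwoEquiv.symm ε), ZMod.finEquiv p i) :=
  rfl

lemma blockEquivZMod_not (i : Fin p) (ε : Bool) :
    blockEquivZMod hp (i, !ε) =
      blockEquivZMod hp (i, ε) + (ZMod.chineseRemainder hp).symm (1, 0) := by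
  rw [blockEquivZMod_apply, blockEquivZMod_apply, ← map_add, Prod.mk_add_mk, add_zero]
  cases ε <;> rfl

lemma blockEquivZMod_add_one (i : Fin p) (ε : Bool) :
    blockEquivZMod hp (i + 1, ε) =
      blockEquivZMod hp (i, ε) + (ZMod.chineseRemainder hp).symm (0, 1) := by
  rw [blockEquivZMod_apply, blockEquivZMod_apply, ← map_add, Prod.mk_add_mk, add_zero,
    map_add, map_one]

end Block

theorem centralizer_Rr_iso_general (p r : ℕ) (hodd : Odd p) :
    Nonempty
      ((Subgroup.centralizer {barPerm (Fin r × Fin p), rotBlocks r p} :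
          Subgroup (Equiv.Perm ((Fin r × Fin p) × Bool))) ≃*
        Wreath (Multiplicative (ZMod (2 * p))) r) := by
  have : NeZero p := ⟨hodd.pos.ne'⟩
  have hcop : Nat.Coprime 2 p := hodd.coprime_two_left
  let e : (Fin r × Fin p) × Bool ≃ Fin r × ZMod (2 * p) :=
    (Equiv.prodAssoc _ _ _).trans ((Equiv.refl _).prodCongr (blockEquivZMod hcop))
  have himage : e.permCongrHom '' {barPerm (Fin r × Fin p), rotBlocks r p} =
      translation r '' {(ZMod.chineseRemainder hcop).symm (1, 0),
        (ZMod.chineseRemainder hcop).symm (0, 1)} := by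
    simp only [Set.image_insert_eq, Set.image_singleton]
    congr 2 <;> ext ⟨j, y⟩ <;>
      obtain ⟨⟨i, ε⟩, rfl⟩ := (blockEquivZMod hcop).surjective y <;>
      simp [e, blockEquivZMod_not, blockEquivZMod_add_one]
  exact ⟨(e.permCongrHom.centralizerMap _).trans <|
    (MulEquiv.subgroupCongr (by rw [himage])).trans
      (centralizerTranslationEquivWreath (ZMod.closure_chineseRemainder_symm_eq_top hcop))⟩

/-- `C_{C₂≀S_{rp}}(R_r) ≅ C_{2p} ≀ S_r`. -/
theorem centralizer_Rr_iso (p r : ℕ) (hp : p.Prime) (hodd : Odd p) :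
    Nonempty
      ((Subgroup.centralizer {barPerm (Fin r × Fin p), rotBlocks r p} :
          Subgroup (Equiv.Perm ((Fin r × Fin p) × Bool))) ≃*
        Wreath (Multiplicative (ZMod (2 * p))) r) :=
  centralizer_Rr_iso_general p r hodd
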